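/- arXiv:1607.01215 — 7 statements merged into one kernel-verified Lean document; each statement's English description precedes it below -/
import Mathlib

section
/- Let A be an n×n invertible matrix and 1 ≤ k ≤ n−1. The determinant of the (n−k)×(n−k) submatrix of A^{-1} obtained by deleting the first k rows and first k columns equals det(A_k)/det(A), where A_k is the leading principal k×k submatrix of A. -/
/-!
If `M * N = 1`, then replacing the first block column of `N` by that of the identity gives
`M * [1, N₁₂; 0, N₂₂] = [M₁₁, 0; M₂₁, 1]`. Both block-triangular determinants are products of
their diagonal blocks, so `det M * det N₂₂ = det M₁₁`. Apply this to `A` and `A⁻¹`, split along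
`Fin (k + m) ≃ Fin k ⊕ Fin m`.
-/

namespace Matrix

variable {ι κ R : Type*} [Fintype ι] [Fintype κ] [DecidableEq ι] [DecidableEq κ] [CommRing R]

theorem mul_fromBlocks_one_zero_eq_of_mul_eq_one {M N : Matrix (ι ⊕ κ) (ι ⊕ κ) R}
    (h : M * N = 1) :
    M * fromBlocks 1 N.toBlocks₁₂ 0 N.toBlocks₂₂ = fromBlocks M.toBlocks₁₁ 0 M.toBlocks₂₁ 1 := by
  ext i (j | j)
  · cases i <;> simp [mul_apply, Fintype.sum_sum_type, toBlocks₁₁, toBlocks₂₁, one_apply]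
  · have hij := congrFun (congrFun h i) (Sum.inr j)
    rw [mul_apply, Fintype.sum_sum_type] at hij
    cases i <;> simpa [mul_apply, Fintype.sum_sum_type, toBlocks₁₂, toBlocks₂₂, one_apply] using hij

theorem det_mul_det_toBlocks₂₂_of_mul_eq_one {M N : Matrix (ι ⊕ κ) (ι ⊕ κ) R}
    (h : M * N = 1) : M.det * N.toBlocks₂₂.det = M.toBlocks₁₁.det := by
  simpa [det_fromBlocks_zero₂₁, det_fromBlocks_zero₁₂] using
    congrArg det (mul_fromBlocks_one_zero_eq_of_mul_eq_one h)

end Matrix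

theorem stmt_2_general {F : Type*} [Field F] {k m : ℕ}
    (A : Matrix (Fin (k + m)) (Fin (k + m)) F) (hA : IsUnit A.det) :
    ((A⁻¹).submatrix (Fin.natAdd k) (Fin.natAdd k) : Matrix (Fin m) (Fin m) F).det =
      (A.submatrix (Fin.castAdd m) (Fin.castAdd m) : Matrix (Fin k) (Fin k) F).det / A.det := by
  let e : Fin k ⊕ Fin m ≃ Fin (k + m) := finSumFinEquiv
  have hmul : A.submatrix e e * A⁻¹.submatrix e e = 1 := by
    rw [Matrix.submatrix_mul_equiv, Matrix.mul_nonsing_inv _ hA, Matrix.submatrix_one_equiv]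
  rw [eq_div_iff hA.ne_zero, mul_comm, ← Matrix.det_submatrix_equiv_self e A]
  -- the blocks of `X.submatrix e e` are definitionally the `castAdd`/`natAdd` submatrices of `X`
  exact Matrix.det_mul_det_toBlocks₂₂_of_mul_eq_one hmul

/-- Jacobi's identity: if `A` is an invertible `(k+m) × (k+m)` matrix (with `1 ≤ k`, `1 ≤ m`,
so `1 ≤ k ≤ n-1` for `n = k+m`), then the determinant of the submatrix of `A⁻¹` obtained by
deleting the first `k` rows and columns equals `det(A_k) / det(A)`, where `A_k` is the leading
principal `k × k` submatrix of `A`. -/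
theorem stmt_2 {F : Type*} [Field F] {k m : ℕ} (hk : 1 ≤ k) (hm : 1 ≤ m)
    (A : Matrix (Fin (k + m)) (Fin (k + m)) F) (hA : IsUnit A.det) :
    ((A⁻¹).submatrix (Fin.natAdd k) (Fin.natAdd k) : Matrix (Fin m) (Fin m) F).det =
      (A.submatrix (Fin.castAdd m) (Fin.castAdd m) : Matrix (Fin k) (Fin k) F).det / A.det :=
  stmt_2_general A hA
end

section
/- Let A be an n×n invertible matrix and T = det(A)·A^{-1}. Then for every 1 ≤ k ≤ n−1, the determinant of the submatrix of T on rows and columns {k+1,…,n} equals det(A_k)·det(A)^{n-1-k}. -/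
/-- If `A` is an invertible `(k+m) × (k+m)` matrix (`1 ≤ k`, `1 ≤ m`) and `T = det(A) • A⁻¹`,
then the determinant of the submatrix of `T` on the last `m` rows and columns equals
`det(A_k) · det(A)^(n-1-k)` with `n = k + m`, i.e. exponent `m - 1`. -/
theorem stmt_3 {F : Type*} [Field F] {k m : ℕ} (hk : 1 ≤ k) (hm : 1 ≤ m)
    (A : Matrix (Fin (k + m)) (Fin (k + m)) F) (hA : IsUnit A.det) :
    let T : Matrix (Fin (k + m)) (Fin (k + m)) F := A.det • A⁻¹
    (T.submatrix (Fin.natAdd k) (Fin.natAdd k) : Matrix (Fin m) (Fin m) F).det =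
      (A.submatrix (Fin.castAdd m) (Fin.castAdd m) : Matrix (Fin k) (Fin k) F).det *
        A.det ^ (m - 1) := by
  intro T
  set d : F := A.det with hd
  have hd0 : d ≠ 0 := hA.ne_zero
  set e : Fin k ⊕ Fin m ≃ Fin (k + m) := finSumFinEquiv with he
  set A' : Matrix (Fin k ⊕ Fin m) (Fin k ⊕ Fin m) F := A.submatrix e e with hA'
  set T' : Matrix (Fin k ⊕ Fin m) (Fin k ⊕ Fin m) F := T.submatrix e e with hT'
  have hdetA' : A'.det = d := Matrix.det_submatrix_equiv_self e A
  -- T' = d • A'⁻¹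
  have hT'inv : T' = d • A'⁻¹ := by
    rw [hT', hA', Matrix.inv_submatrix_equiv]; rfl
  -- A' * T' = d • 1
  have hmul : A' * T' = d • 1 := by
    rw [hT'inv, Matrix.mul_smul, Matrix.mul_nonsing_inv _ (by rwa [hdetA'])]
  -- the block matrices
  set B := A'.toBlocks₁₁ with hB
  set D := A'.toBlocks₂₁ with hD
  set C := A'.toBlocks₁₂ with hC
  set E := A'.toBlocks₂₂ with hE
  set M : Matrix (Fin k ⊕ Fin m) (Fin k ⊕ Fin m) F :=
    Matrix.fromBlocks 1 T'.toBlocks₁₂ 0 T'.toBlocks₂₂ with hM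
  have hAM : A' * M = Matrix.fromBlocks B 0 D (d • 1) := by
    have h1 : A' = Matrix.fromBlocks B C D E := (A'.fromBlocks_toBlocks).symm
    have h2 : A' * T' = Matrix.fromBlocks B C D E *
        Matrix.fromBlocks T'.toBlocks₁₁ T'.toBlocks₁₂ T'.toBlocks₂₁ T'.toBlocks₂₂ := by
      rw [← h1, T'.fromBlocks_toBlocks]
    rw [hmul] at h2
    have hsm : (d • (1 : Matrix (Fin k ⊕ Fin m) (Fin k ⊕ Fin m) F)) =
        Matrix.fromBlocks (d • 1) 0 0 (d • 1) := by
      rw [← Matrix.fromBlocks_one, Matrix.fromBlocks_smul]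
      simp
    rw [hsm, Matrix.fromBlocks_multiply] at h2
    have h12 : B * T'.toBlocks₁₂ + C * T'.toBlocks₂₂ = 0 := by
      have := congrArg Matrix.toBlocks₁₂ h2
      simpa [Matrix.toBlocks_fromBlocks₁₂] using this.symm
    have h22 : D * T'.toBlocks₁₂ + E * T'.toBlocks₂₂ = d • 1 := by
      have := congrArg Matrix.toBlocks₂₂ h2
      simpa [Matrix.toBlocks_fromBlocks₂₂] using this.symm
    rw [h1, hM, Matrix.fromBlocks_multiply]
    simp [h12, h22]
  have hdetM : M.det = (T'.toBlocks₂₂).det := by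
    rw [hM, Matrix.det_fromBlocks_zero₂₁]; simp
  have key : d * (T'.toBlocks₂₂).det = B.det * d ^ m := by
    have := congrArg Matrix.det hAM
    rw [Matrix.det_mul, hdetA', hdetM, Matrix.det_fromBlocks_zero₁₂] at this
    simpa [Matrix.det_smul] using this
  -- identify blocks with submatrices
  have hT22 : T'.toBlocks₂₂ = T.submatrix (Fin.natAdd k) (Fin.natAdd k) := by
    ext i j
    simp [Matrix.toBlocks₂₂, hT', he, finSumFinEquiv]
  have hB' : B = A.submatrix (Fin.castAdd m) (Fin.castAdd m) := by
    ext i j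
    simp [hB, Matrix.toBlocks₁₁, hA', he, finSumFinEquiv]
  rw [← hT22, ← hB']
  have hpow : d ^ m = d * d ^ (m - 1) := by
    conv_lhs => rw [show m = (m - 1) + 1 from (Nat.succ_pred_eq_of_pos hm).symm]
    rw [pow_succ']
  have h2 : d * T'.toBlocks₂₂.det = d * (B.det * d ^ (m - 1)) := by rw [key, hpow]; ring
  exact mul_left_cancel₀ hd0 h2
end

section
/- Let A be an n×n positive definite matrix, T = det(A)·A^{-1}, L ⊆ 𝕂ⁿ a subspace with dim(L^⊥) = 1, x ∈ L^⊥, and M = √T(L). Then ‖P_{M^⊥}√T x‖² = (det(A)/⟨x, Ax⟩)·‖x‖⁴, where P_{M^⊥} is the orthogonal projection onto M^⊥. -/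
open scoped ComplexOrder InnerProductSpace

/-!
Write `S = √T`, a self-adjoint square root of `T = det(A) • A⁻¹`, so that `S A S = det(A) • 1`;
in particular `S` is invertible, and we put `u = S⁻¹ x`. Since `S` is self-adjoint,
`y ⊥ S(L)` iff `S y ⊥ L` iff `S y ∈ 𝕜 ∙ x`, so `(S L)ᗮ = 𝕜 ∙ u`. Projecting `S x` onto `u`
gives a vector of norm `|⟪u, S x⟫| / ‖u‖ = ‖x‖² / ‖u‖`, while
`⟪x, A x⟫ = ⟪u, S A S u⟫ = det(A) ‖u‖²`.
-/

theorem Submodule.norm_starProjection_singleton {𝕜 E : Type*} [RCLike 𝕜] [NormedAddCommGroup E]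
    [InnerProductSpace 𝕜 E] (v w : E) :
    ‖(𝕜 ∙ v).starProjection w‖ = ‖⟪v, w⟫_𝕜‖ / ‖v‖ := by
  rcases eq_or_ne v 0 with rfl | hv
  · simp
  rw [Submodule.starProjection_singleton, norm_smul, norm_div, RCLike.norm_ofReal,
    abs_of_nonneg (by positivity)]
  field_simp [norm_ne_zero_iff.2 hv]

namespace LinearMap.IsSymmetric

variable {𝕜 E : Type*} [RCLike 𝕜] [NormedAddCommGroup E] [InnerProductSpace 𝕜 E]
  {S : E →ₗ[𝕜] E} (hS : S.IsSymmetric)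
include hS

theorem orthogonal_map (L : Submodule 𝕜 E) : (L.map S)ᗮ = Lᗮ.comap S := by
  ext y
  simp only [Submodule.mem_orthogonal, Submodule.mem_comap, Submodule.mem_map,
    forall_exists_index, and_imp, forall_apply_eq_imp_iff₂, hS _ y]

theorem orthogonal_map_eq_span (hinj : Function.Injective S) {L : Submodule 𝕜 E} {x u : E}
    (hLx : Lᗮ = 𝕜 ∙ x) (hu : S u = x) : (L.map S)ᗮ = 𝕜 ∙ u := by
  rw [hS.orthogonal_map, hLx, ← hu, ← Set.image_singleton, ← Submodule.map_span]
  exact Submodule.comap_map_eq_of_injective hinj _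

theorem norm_starProjection_orthogonal_map_apply [CompleteSpace E]
    (hinj : Function.Injective S) {L : Submodule 𝕜 E} {x u : E} (hLx : Lᗮ = 𝕜 ∙ x)
    (hu : S u = x) : ‖(L.map S)ᗮ.starProjection (S x)‖ = ‖x‖ ^ 2 / ‖u‖ := by
  simp only [hS.orthogonal_map_eq_span hinj hLx hu]
  rw [Submodule.norm_starProjection_singleton, ← hS, hu,
    inner_self_eq_norm_sq_to_K]
  norm_cast
  rw [abs_of_nonneg (by positivity)]

theorem inner_apply_eq_mul_norm_sq {A : E →ₗ[𝕜] E} {c : 𝕜} (hSAS : ∀ v, S (A (S v)) = c • v)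
    {x u : E} (hu : S u = x) : ⟪x, A x⟫_𝕜 = c * ‖u‖ ^ 2 := by
  rw [← hu, hS, hSAS, inner_smul_right, inner_self_eq_norm_sq_to_K]

theorem norm_sq_starProjection_orthogonal_map_apply [CompleteSpace E] {A : E →ₗ[𝕜] E} {c : 𝕜}
    (hc : c ≠ 0) (hSAS : ∀ v, S (A (S v)) = c • v) {L : Submodule 𝕜 E}
    (hL : Module.finrank 𝕜 Lᗮ = 1) {x : E} (hx : x ∈ Lᗮ) :
    (‖(L.map S)ᗮ.starProjection (S x)‖ ^ 2 : 𝕜) = c / ⟪x, A x⟫_𝕜 * (‖x‖ ^ 4 : ℝ) := by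
  rcases eq_or_ne x 0 with rfl | hx0
  · simp
  have hinj : Function.Injective S := fun v w hvw ↦ by
    simpa [hSAS, hc] using congr(c⁻¹ • S (A $hvw))
  set u := c⁻¹ • A (S x)
  have hu : S u = x := by simp [u, hSAS, hc]
  have hu0 : u ≠ 0 := fun h ↦ hx0 (by rw [← hu, h, map_zero])
  rw [hS.norm_starProjection_orthogonal_map_apply hinj
      (eq_span_singleton_of_mem_of_finrank_eq_one hL hx hx0) hu,
    hS.inner_apply_eq_mul_norm_sq hSAS hu]
  push_cast
  field_simp

end LinearMap.IsSymmetric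

theorem Matrix.IsHermitian.isHermitian_cfc {𝕜 n : Type*} [RCLike 𝕜] [Fintype n] [DecidableEq n]
    {A : Matrix n n 𝕜} (hA : A.IsHermitian) (f : ℝ → ℝ) : (hA.cfc f).IsHermitian := by
  rw [← hA.cfc_eq]
  exact cfc_predicate f A

theorem Matrix.PosSemidef.cfc_sqrt_mul_self {𝕜 n : Type*} [RCLike 𝕜] [Fintype n]
    [DecidableEq n] {A : Matrix n n 𝕜} (hA : A.PosSemidef) :
    hA.1.cfc Real.sqrt * hA.1.cfc Real.sqrt = A := by
  have hA' : IsSelfAdjoint A := hA.1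
  rw [← hA.1.cfc_eq, ← cfc_mul ..]
  conv_rhs => rw [← cfc_id ℝ A]
  refine cfc_congr fun t ht ↦ Real.mul_self_sqrt ?_
  obtain ⟨i, rfl⟩ := hA.1.spectrum_real_eq_range_eigenvalues ▸ ht
  exact hA.eigenvalues_nonneg i

theorem Matrix.mul_mul_eq_smul_one_of_mul_self_eq_smul_inv {n K : Type*} [Fintype n]
    [DecidableEq n] [Field K] {A B : Matrix n n K} {c : K} (hA : IsUnit A.det) (hc : c ≠ 0)
    (hB : B * B = c • A⁻¹) : B * A * B = c • 1 := by
  have hright : B * (c⁻¹ • (B * A)) = 1 := by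
    rw [Matrix.mul_smul, ← Matrix.mul_assoc, hB, Matrix.smul_mul, Matrix.nonsing_inv_mul A hA,
      smul_smul, inv_mul_cancel₀ hc, one_smul]
  rw [mul_eq_one_comm, Matrix.smul_mul] at hright
  rwa [← inv_smul_eq_iff₀ hc]

theorem Matrix.toEuclideanLin_mul_apply {𝕜 l m n : Type*} [RCLike 𝕜] [Fintype m] [Fintype n]
    [DecidableEq m] [DecidableEq n] (C : Matrix l m 𝕜) (D : Matrix m n 𝕜)
    (v : EuclideanSpace 𝕜 n) :
    (C * D).toEuclideanLin v = C.toEuclideanLin (D.toEuclideanLin v) := by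
  simp

/-- Let `A` be an `n × n` positive definite matrix over `𝕜`, `T = det(A) • A⁻¹` (also positive
definite), `L ⊆ 𝕜ⁿ` a subspace with one-dimensional orthogonal complement, `x ∈ L^⊥`, and
`M = √T (L)`.  Then `‖P_{M^⊥} √T x‖² = (det A / ⟨x, Ax⟩) · ‖x‖⁴`. -/
theorem stmt_10 {𝕜 : Type*} [RCLike 𝕜] {n : ℕ}
    (A : Matrix (Fin n) (Fin n) 𝕜) (hA : A.PosDef)
    (hT : (A.det • A⁻¹).PosDef)
    (L : Submodule 𝕜 (EuclideanSpace 𝕜 (Fin n)))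
    (hL : Module.finrank 𝕜 (Lᗮ : Submodule 𝕜 (EuclideanSpace 𝕜 (Fin n))) = 1)
    (x : EuclideanSpace 𝕜 (Fin n)) (hx : x ∈ Lᗮ) :
    let Slin := Matrix.toEuclideanLin
      ((hT.posSemidef.1.eigenvectorUnitary : Matrix (Fin n) (Fin n) 𝕜) *
        Matrix.diagonal ((↑) ∘ (√·) ∘ hT.posSemidef.1.eigenvalues) *
        (star hT.posSemidef.1.eigenvectorUnitary : Matrix (Fin n) (Fin n) 𝕜))
    let M : Submodule 𝕜 (EuclideanSpace 𝕜 (Fin n)) := L.map Slin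
    (‖(Submodule.orthogonalProjectionOnto Mᗮ (Slin x) : EuclideanSpace 𝕜 (Fin n))‖ ^ 2 : 𝕜) =
      A.det / ⟪x, Matrix.toEuclideanLin A x⟫_𝕜 * (‖x‖ ^ 4 : ℝ) := by
  intro Slin M
  set B := hT.posSemidef.1.cfc Real.sqrt
  -- `IsHermitian.cfc` unfolds to exactly the spectral formula used for `√T` in the statement
  have hSlin : Slin = B.toEuclideanLin := rfl
  have hdet : A.det ≠ 0 := hA.det_pos.ne'
  have hBAB : B * A * B = A.det • 1 := Matrix.mul_mul_eq_smul_one_of_mul_self_eq_smul_inv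
    hdet.isUnit hdet hT.posSemidef.cfc_sqrt_mul_self
  have hS : Slin.IsSymmetric :=
    Matrix.isSymmetric_toEuclideanLin_iff.2 (hT.posSemidef.1.isHermitian_cfc _)
  have hSAS (v) : Slin (A.toEuclideanLin (Slin v)) = A.det • v := by
    rw [hSlin, ← Matrix.toEuclideanLin_mul_apply, ← Matrix.toEuclideanLin_mul_apply, hBAB]
    simp
  rw [Submodule.coe_orthogonalProjectionOnto_apply]
  exact hS.norm_sq_starProjection_orthogonal_map_apply hdet hSAS hL hx
end

section
/- Let A be a 3×3 positive definite matrix with leading principal submatrices A_2 and A_3 = A, let L = Span{(0,0,1)ᵀ}, and M = √(A^{-1})(L). Then √(A^{-1}) P_{M^⊥} √(A^{-1}) equals the block matrix with A_2^{-1} in the upper-left 2×2 block and zeros elsewhere, where P_{M^⊥} is the orthogonal projection onto M^⊥. -/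
open scoped ComplexOrder InnerProductSpace

/-!
Write `B = A⁻¹` and `S = √B`, so that `S` is self-adjoint with `S² = B` and `M = 𝕜 ∙ S e₃`.
Conjugating the projection onto `(𝕜 ∙ S e₃)ᗮ` by `S` gives `w ↦ B w - (e₃ᴴ B w / B₃₃) • B e₃`,
the matrix obtained from `B` by one step of Gaussian elimination at the pivot `(3, 3)`.
Its last row and column vanish, and because `B A = 1` its leading `2 × 2` block times `A₂`
is the identity, so that block is `A₂⁻¹`.
-/

/-- The positive semidefinite square root of a positive semidefinite matrix
(the definition of `Matrix.PosSemidef.sqrt` in the older Mathlib, since removed). -/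
noncomputable def Matrix.PosSemidef.sqrt {n 𝕜 : Type*} [Fintype n] [DecidableEq n] [RCLike 𝕜]
    {A : Matrix n n 𝕜} (hA : A.PosSemidef) : Matrix n n 𝕜 :=
  hA.1.eigenvectorUnitary.1 * Matrix.diagonal ((↑) ∘ (√·) ∘ hA.1.eigenvalues) *
    (star hA.1.eigenvectorUnitary : Matrix n n 𝕜)

namespace LinearMap.IsSymmetric

variable {𝕜 E : Type*} [RCLike 𝕜] [NormedAddCommGroup E] [InnerProductSpace 𝕜 E]

theorem comp_starProjection_orthogonal_span_comp_apply {T : E →ₗ[𝕜] E} (hT : T.IsSymmetric)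
    (u x : E) :
    T ((𝕜 ∙ T u)ᗮ.starProjection (T x)) =
      T (T x) - (⟪u, T (T x)⟫_𝕜 / ⟪u, T (T u)⟫_𝕜) • T (T u) := by
  rw [Submodule.starProjection_orthogonal_val, Submodule.starProjection_singleton, map_sub,
    map_smul, hT, RCLike.ofReal_pow, ← inner_self_eq_norm_sq_to_K, hT]

end LinearMap.IsSymmetric

namespace Matrix

def schurPivot {n K : Type*} [DivisionRing K] (B : Matrix n n K) (l : n) : Matrix n n K :=
  of fun i j => B i j - B i l * B l j / B l l

theorem toEuclideanLin_schurPivot_apply {n 𝕜 : Type*} [Fintype n] [DecidableEq n] [RCLike 𝕜]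
    (B : Matrix n n 𝕜) (l : n) (w : EuclideanSpace 𝕜 n) :
    (B.schurPivot l).toEuclideanLin w = B.toEuclideanLin w -
      (⟪EuclideanSpace.single l 1, B.toEuclideanLin w⟫_𝕜 /
        ⟪EuclideanSpace.single l 1, B.toEuclideanLin (EuclideanSpace.single l 1)⟫_𝕜) •
          B.toEuclideanLin (EuclideanSpace.single l 1) := by
  ext i
  simp only [schurPivot, toLpLin_apply, mulVec, dotProduct, of_apply, sub_mul,
    Finset.sum_sub_distrib, EuclideanSpace.inner_single_left, map_one, one_mul, PiLp.ofLp_single,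
    mulVec_single, MulOpposite.op_one, one_smul, col_apply, PiLp.sub_apply, PiLp.smul_apply,
    smul_eq_mul, sub_right_inj]
  rw [Finset.sum_div, Finset.sum_mul]
  exact Finset.sum_congr rfl fun _ _ => by ring

variable {K : Type*} [Field K] {n : ℕ}

theorem inv_submatrix_castSucc (A : Matrix (Fin (n + 1)) (Fin (n + 1)) K) (hA : IsUnit A.det)
    (hl : A⁻¹ (Fin.last n) (Fin.last n) ≠ 0) :
    (A.submatrix Fin.castSucc Fin.castSucc)⁻¹ =
      (A⁻¹.schurPivot (Fin.last n)).submatrix Fin.castSucc Fin.castSucc := by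
  refine inv_eq_left_inv ?_
  ext i j
  have hBA := congrFun₂ (nonsing_inv_mul A hA)
  have hi := hBA i.castSucc j.castSucc
  have hlast := hBA (Fin.last n) j.castSucc
  simp only [mul_apply, Fin.sum_univ_castSucc, one_apply, Fin.castSucc_inj,
    (Fin.castSucc_lt_last j).ne', if_false] at hi hlast
  have hfactor : ∑ k : Fin n,
        A⁻¹.schurPivot (Fin.last n) i.castSucc k.castSucc * A k.castSucc j.castSucc =
      ∑ k : Fin n, A⁻¹ i.castSucc k.castSucc * A k.castSucc j.castSucc -
        A⁻¹ i.castSucc (Fin.last n) / A⁻¹ (Fin.last n) (Fin.last n) *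
          ∑ k : Fin n, A⁻¹ (Fin.last n) k.castSucc * A k.castSucc j.castSucc := by
    simp only [schurPivot, of_apply, sub_mul, Finset.sum_sub_distrib, Finset.mul_sum]
    exact congrArg _ (Finset.sum_congr rfl fun _ _ => by ring)
  simp only [mul_apply, submatrix_apply, hfactor, one_apply]
  rw [eq_neg_of_add_eq_zero_left hlast, ← hi]
  field_simp
  ring

theorem schurPivot_inv_last (A : Matrix (Fin (n + 1)) (Fin (n + 1)) K) (hA : IsUnit A.det)
    (hl : A⁻¹ (Fin.last n) (Fin.last n) ≠ 0) :
    A⁻¹.schurPivot (Fin.last n) = of fun i j : Fin (n + 1) =>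
      if h : i.1 < n ∧ j.1 < n then (A.submatrix Fin.castSucc Fin.castSucc)⁻¹ ⟨i, h.1⟩ ⟨j, h.2⟩
      else 0 := by
  ext i j
  rw [of_apply]
  split_ifs with h
  · rw [inv_submatrix_castSucc A hA hl]
    rfl
  · rcases not_and_or.1 h with h | h <;>
      rw [Fin.eq_last_of_not_lt h, schurPivot, of_apply] <;> field_simp <;> ring

end Matrix

namespace Matrix.PosSemidef

variable {n 𝕜 : Type*} [Fintype n] [DecidableEq n] [RCLike 𝕜] {B : Matrix n n 𝕜}

theorem isHermitian_sqrt (hB : B.PosSemidef) : hB.sqrt.IsHermitian := by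
  refine isHermitian_mul_mul_conjTranspose _ (isHermitian_diagonal_of_self_adjoint _ ?_)
  funext i
  simp [Function.comp]

theorem sqrt_mul_self (hB : B.PosSemidef) : hB.sqrt * hB.sqrt = B := by
  unfold Matrix.PosSemidef.sqrt
  conv_rhs => rw [hB.1.spectral_theorem]
  have hU : (star hB.1.eigenvectorUnitary : Matrix n n 𝕜) * hB.1.eigenvectorUnitary.1 = 1 :=
    Unitary.coe_star_mul_self _
  rw [Unitary.conjStarAlgAut_apply]
  simp only [Matrix.mul_assoc]
  congr 1
  rw [← Matrix.mul_assoc (star _ : Matrix n n 𝕜), hU, Matrix.one_mul, ← Matrix.mul_assoc,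
    Matrix.diagonal_mul_diagonal]
  congr 2
  funext i
  simp only [Function.comp]
  rw [← RCLike.ofReal_mul, Real.mul_self_sqrt (hB.eigenvalues_nonneg i)]

end Matrix.PosSemidef

/-- Let `A` be a `3 × 3` positive definite matrix, `A₂` its leading principal `2 × 2`
submatrix, `L = span{(0,0,1)}`, `M = √(A⁻¹)(L)`.  Then
`√(A⁻¹) P_{M^⊥} √(A⁻¹)` is the block matrix `[[A₂⁻¹, 0], [0, 0]]`. -/
theorem stmt_11 {𝕜 : Type*} [RCLike 𝕜]
    (A : Matrix (Fin 3) (Fin 3) 𝕜) (hA : A.PosDef) :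
    let A₂ : Matrix (Fin 2) (Fin 2) 𝕜 :=
      A.submatrix (Fin.castLE (by norm_num)) (Fin.castLE (by norm_num))
    let Slin := Matrix.toEuclideanLin hA.inv.posSemidef.sqrt
    let L : Submodule 𝕜 (EuclideanSpace 𝕜 (Fin 3)) :=
      Submodule.span 𝕜 {EuclideanSpace.single (2 : Fin 3) (1 : 𝕜)}
    let M : Submodule 𝕜 (EuclideanSpace 𝕜 (Fin 3)) := L.map Slin
    let P : EuclideanSpace 𝕜 (Fin 3) →ₗ[𝕜] EuclideanSpace 𝕜 (Fin 3) :=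
      Mᗮ.subtype ∘ₗ (Mᗮ.orthogonalProjectionOnto).toLinearMap
    Slin ∘ₗ P ∘ₗ Slin =
      Matrix.toEuclideanLin (Matrix.of fun i j : Fin 3 =>
        if h : i.1 < 2 ∧ j.1 < 2 then A₂⁻¹ ⟨i.1, h.1⟩ ⟨j.1, h.2⟩ else 0) := by
  intro A₂ Slin L M P
  have hS : Slin.IsSymmetric :=
    Matrix.isSymmetric_toEuclideanLin_iff.mpr hA.inv.posSemidef.isHermitian_sqrt
  have hSS (x) : Slin (Slin x) = A⁻¹.toEuclideanLin x := by
    rw [← LinearMap.comp_apply, ← Matrix.toLpLin_mul_same, hA.inv.posSemidef.sqrt_mul_self]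
  have hM : M = 𝕜 ∙ Slin (EuclideanSpace.single 2 1) := by
    simp only [M, L, Submodule.map_span, Set.image_singleton]
  rw [show A₂ = A.submatrix Fin.castSucc Fin.castSucc from rfl,
    ← Matrix.schurPivot_inv_last A ((Matrix.isUnit_iff_isUnit_det _).mp hA.isUnit)
      hA.inv.diag_pos.ne']
  ext1 w
  change Slin (Mᗮ.starProjection (Slin w)) = _
  simp only [hM]
  rw [hS.comp_starProjection_orthogonal_span_comp_apply, hSS, hSS,
    Matrix.toEuclideanLin_schurPivot_apply]
  rfl
end

section
/- The double integral over [0,1]² of the function V(a,f) = (128/45)π² · (af)^{3/2}(5(1−a)(1−f) − af) for a+f < 1 and (128/45)π² · ((1−a)(1−f))^{3/2}(5af − (1−a)(1−f)) for a+f ≥ 1, equals 4π³/105. -/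
/-!
Write `w(a,f) = (128/45)π² (af)^{3/2} (5(1-a)(1-f) - af)` (`lowerVaf`). Then `V = w` on the
triangle `a + f < 1` and `V(a,f) = w(1-a,1-f)` on its complement; as `w` is symmetric, the two
expressions agree on the line `a + f = 1`, so `V` is continuous. For fixed `a` the inner integral
is `G(a) + G(1-a)` with `G(a) = ∫₀^{1-a} w(a,f) df`, so the double integral is `2 ∫₀¹ G`.
Integrating `f^{3/2}` times a linear polynomial gives
`G(a) = (128/45)π²/7 · a^{3/2}(1-a)^{7/2}(4+8a)`, whose integral is a combination of the Beta
values `B(5/2,9/2)` and `B(7/2,9/2)`, computed from `Γ` at half-integers.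
-/

open MeasureTheory Real

/-- The fibre-volume function of real qubit channels over classical channels. -/
noncomputable def Vaf (a f : ℝ) : ℝ :=
  if a + f < 1 then
    128 / 45 * π ^ 2 * (a * f) ^ ((3 : ℝ) / 2) * (5 * (1 - a) * (1 - f) - a * f)
  else
    128 / 45 * π ^ 2 * ((1 - a) * (1 - f)) ^ ((3 : ℝ) / 2) * (5 * a * f - (1 - a) * (1 - f))

theorem integral_rpow_mul_one_sub_rpow {u v : ℝ} (hu : 0 < u) (hv : 0 < v) :
    ∫ x in (0 : ℝ)..1, x ^ (u - 1) * (1 - x) ^ (v - 1) = Gamma u * Gamma v / Gamma (u + v) := by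
  have h : ((∫ x in (0 : ℝ)..1, x ^ (u - 1) * (1 - x) ^ (v - 1) : ℝ) : ℂ)
      = Complex.betaIntegral u v := by
    rw [Complex.betaIntegral, ← intervalIntegral.integral_ofReal]
    refine intervalIntegral.integral_congr fun x hx => ?_
    rw [Set.uIcc_of_le zero_le_one] at hx
    simp [Complex.ofReal_cpow hx.1, Complex.ofReal_cpow (sub_nonneg.2 hx.2)]
  rw [Complex.betaIntegral_eq_Gamma_mul_div u v (by simpa using hu) (by simpa using hv),
    ← Complex.ofReal_add] at h
  simp only [Complex.Gamma_ofReal] at h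
  exact_mod_cast h

theorem intervalIntegral.integral_add_comp_one_sub {g : ℝ → ℝ}
    (hg : IntervalIntegrable g volume 0 1) :
    ∫ x in (0 : ℝ)..1, (g x + g (1 - x)) = 2 * ∫ x in (0 : ℝ)..1, g x := by
  rw [intervalIntegral.integral_add hg (by simpa using (hg.comp_sub_left 1).symm),
    intervalIntegral.integral_comp_sub_left g 1]
  norm_num
  ring

theorem integral_rpow_mul_add_mul {p c : ℝ} (hp : -1 < p) (hc : 0 ≤ c) (A B : ℝ) :
    ∫ x in (0 : ℝ)..c, x ^ p * (A + B * x)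
      = A * c ^ (p + 1) / (p + 1) + B * c ^ (p + 2) / (p + 2) := by
  have hp1 : p + 1 ≠ 0 := by linarith
  have hp2 : p + 1 + 1 ≠ 0 := by linarith
  have h : ∫ x in (0 : ℝ)..c, x ^ p * (A + B * x)
      = ∫ x in (0 : ℝ)..c, (A * x ^ p + B * x ^ (p + 1)) := by
    refine intervalIntegral.integral_congr fun x hx => ?_
    rw [Set.uIcc_of_le hc] at hx
    simp only [rpow_add_one' hx.1 hp1]
    ring
  rw [h, intervalIntegral.integral_add, intervalIntegral.integral_const_mul,
    intervalIntegral.integral_const_mul, integral_rpow (Or.inl hp),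
    integral_rpow (Or.inl (by linarith)), zero_rpow hp1, zero_rpow hp2]
  · ring_nf
  · exact (intervalIntegral.intervalIntegrable_rpow' hp).const_mul A
  · exact (intervalIntegral.intervalIntegrable_rpow' (by linarith)).const_mul B

theorem Gamma_five_halves : Gamma (5 / 2) = 3 * √π / 4 := by
  have h := Gamma_nat_add_half 2
  norm_num [Nat.doubleFactorial] at h
  exact h

theorem Gamma_seven_halves : Gamma (7 / 2) = 15 * √π / 8 := by
  have h := Gamma_nat_add_half 3
  norm_num [Nat.doubleFactorial] at h
  exact h

theorem Gamma_nine_halves : Gamma (9 / 2) = 105 * √π / 16 := by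
  have h := Gamma_nat_add_half 4
  norm_num [Nat.doubleFactorial] at h
  exact h

theorem integral_rpow_three_halves_mul_one_sub_rpow_seven_halves :
    ∫ x in (0 : ℝ)..1, x ^ ((3 : ℝ) / 2) * (1 - x) ^ ((7 : ℝ) / 2) = 7 * π / 1024 := by
  have h := integral_rpow_mul_one_sub_rpow (u := 5 / 2) (v := 9 / 2) (by norm_num) (by norm_num)
  norm_num [Gamma_ofNat_eq_factorial, Nat.factorial, Gamma_five_halves, Gamma_nine_halves] at h
  rw [h]
  ring_nf
  rw [sq_sqrt pi_pos.le]

theorem integral_rpow_five_halves_mul_one_sub_rpow_seven_halves :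
    ∫ x in (0 : ℝ)..1, x ^ ((5 : ℝ) / 2) * (1 - x) ^ ((7 : ℝ) / 2) = 5 * π / 2048 := by
  have h := integral_rpow_mul_one_sub_rpow (u := 7 / 2) (v := 9 / 2) (by norm_num) (by norm_num)
  norm_num [Gamma_ofNat_eq_factorial, Nat.factorial, Gamma_seven_halves, Gamma_nine_halves] at h
  rw [h]
  ring_nf
  rw [sq_sqrt pi_pos.le]

noncomputable def lowerVaf (a f : ℝ) : ℝ :=
  128 / 45 * π ^ 2 * (a * f) ^ ((3 : ℝ) / 2) * (5 * (1 - a) * (1 - f) - a * f)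

theorem Vaf_eq_ite (a f : ℝ) :
    Vaf a f = if a + f < 1 then lowerVaf a f else lowerVaf (1 - a) (1 - f) := by
  simp only [Vaf, lowerVaf, sub_sub_cancel]

theorem lowerVaf_comm (a f : ℝ) : lowerVaf f a = lowerVaf a f := by
  simp only [lowerVaf, mul_comm f a]
  ring

theorem lowerVaf_one_sub_of_add_eq_one {a f : ℝ} (h : a + f = 1) :
    lowerVaf (1 - a) (1 - f) = lowerVaf a f := by
  rw [show 1 - a = f by linarith, show 1 - f = a by linarith, lowerVaf_comm]

theorem continuous_lowerVaf : Continuous fun p : ℝ × ℝ => lowerVaf p.1 p.2 := by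
  unfold lowerVaf
  fun_prop (disch := norm_num)

theorem continuous_Vaf : Continuous fun p : ℝ × ℝ => Vaf p.1 p.2 := by
  simp only [Vaf_eq_ite, ← not_le, ite_not]
  exact Continuous.if_le
    (continuous_lowerVaf.comp (f := fun p : ℝ × ℝ => (1 - p.1, 1 - p.2)) (by fun_prop))
    continuous_lowerVaf continuous_const (by fun_prop)
    fun p hp => lowerVaf_one_sub_of_add_eq_one hp.symm

theorem integral_Vaf {a : ℝ} (ha0 : 0 ≤ a) (ha1 : a ≤ 1) :
    ∫ f in (0 : ℝ)..1, Vaf a f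
      = (∫ f in (0 : ℝ)..1 - a, lowerVaf a f)
        + ∫ f in (0 : ℝ)..1 - (1 - a), lowerVaf (1 - a) f := by
  have hint : ∀ b c : ℝ, IntervalIntegrable (Vaf a) volume b c := fun b c =>
    (continuous_Vaf.comp (Continuous.prodMk_right a)).intervalIntegrable b c
  rw [← intervalIntegral.integral_add_adjacent_intervals (hint 0 (1 - a)) (hint (1 - a) 1)]
  congr 1
  · refine intervalIntegral.integral_congr fun f hf => ?_
    rw [Set.uIcc_of_le (by linarith)] at hf
    rw [Vaf_eq_ite]
    split_ifs with h
    · rfl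
    · exact lowerVaf_one_sub_of_add_eq_one (by linarith [hf.2, not_lt.1 h])
  · rw [← sub_self (1 : ℝ), ← intervalIntegral.integral_comp_sub_left]
    refine intervalIntegral.integral_congr fun f hf => ?_
    rw [Set.uIcc_of_le (by linarith)] at hf
    simp only [Vaf_eq_ite, if_neg (not_lt.2 (by linarith [hf.1] : 1 ≤ a + f))]

theorem integral_lowerVaf {a : ℝ} (ha0 : 0 ≤ a) (ha1 : a ≤ 1) :
    ∫ f in (0 : ℝ)..1 - a, lowerVaf a f
      = 128 / 45 * π ^ 2 / 7 *
          (a ^ ((3 : ℝ) / 2) * (1 - a) ^ ((7 : ℝ) / 2) * (4 + 8 * a)) := by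
  have hc : 0 ≤ 1 - a := by linarith
  have h : ∫ f in (0 : ℝ)..1 - a, lowerVaf a f = 128 / 45 * π ^ 2 * a ^ ((3 : ℝ) / 2) *
      ∫ f in (0 : ℝ)..1 - a, f ^ ((3 : ℝ) / 2) * (5 * (1 - a) + -(1 + 4 * (1 - a)) * f) := by
    rw [← intervalIntegral.integral_const_mul]
    refine intervalIntegral.integral_congr fun f hf => ?_
    rw [Set.uIcc_of_le hc] at hf
    simp only [lowerVaf, mul_rpow ha0 hf.1]
    ring
  rw [h, integral_rpow_mul_add_mul (by norm_num) hc, show (3 : ℝ) / 2 + 1 = 5 / 2 by norm_num,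
    show (3 : ℝ) / 2 + 2 = 5 / 2 + 1 by norm_num, show (7 : ℝ) / 2 = 5 / 2 + 1 by norm_num,
    rpow_add_one' hc (by norm_num)]
  ring

theorem integral_rpow_three_halves_mul_one_sub_rpow_seven_halves_mul_linear :
    ∫ x in (0 : ℝ)..1, x ^ ((3 : ℝ) / 2) * (1 - x) ^ ((7 : ℝ) / 2) * (4 + 8 * x)
      = 3 * π / 64 := by
  have h : ∫ x in (0 : ℝ)..1, x ^ ((3 : ℝ) / 2) * (1 - x) ^ ((7 : ℝ) / 2) * (4 + 8 * x)
      = ∫ x in (0 : ℝ)..1, (4 * (x ^ ((3 : ℝ) / 2) * (1 - x) ^ ((7 : ℝ) / 2))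
          + 8 * (x ^ ((5 : ℝ) / 2) * (1 - x) ^ ((7 : ℝ) / 2))) := by
    refine intervalIntegral.integral_congr fun x hx => ?_
    rw [Set.uIcc_of_le zero_le_one] at hx
    rw [show (5 : ℝ) / 2 = 3 / 2 + 1 by norm_num, rpow_add_one' hx.1 (by norm_num)]
    ring
  rw [h, intervalIntegral.integral_add
      (Continuous.intervalIntegrable (by fun_prop (disch := norm_num)) 0 1)
      (Continuous.intervalIntegrable (by fun_prop (disch := norm_num)) 0 1),
    intervalIntegral.integral_const_mul, intervalIntegral.integral_const_mul,
    integral_rpow_three_halves_mul_one_sub_rpow_seven_halves,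
    integral_rpow_five_halves_mul_one_sub_rpow_seven_halves]
  ring

/-- The integral of `V(a,f)` over `[0,1]²` equals `4π³/105`. -/
theorem stmt_14 :
    ∫ p in (Set.Icc (0 : ℝ) 1 ×ˢ Set.Icc (0 : ℝ) 1), Vaf p.1 p.2 = 4 * π ^ 3 / 105 := by
  have hint : IntegrableOn (fun p : ℝ × ℝ => Vaf p.1 p.2) (Set.Icc 0 1 ×ˢ Set.Icc 0 1)
      (volume.prod volume) :=
    continuous_Vaf.continuousOn.integrableOn_compact (isCompact_Icc.prod isCompact_Icc)
  rw [Measure.volume_eq_prod, setIntegral_prod _ hint]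
  simp only [integral_Icc_eq_integral_Ioc, ← intervalIntegral.integral_of_le zero_le_one]
  set g : ℝ → ℝ := fun a => 128 / 45 * π ^ 2 / 7 *
    (a ^ ((3 : ℝ) / 2) * (1 - a) ^ ((7 : ℝ) / 2) * (4 + 8 * a)) with hg
  calc ∫ a in (0 : ℝ)..1, ∫ f in (0 : ℝ)..1, Vaf a f
      = ∫ a in (0 : ℝ)..1, (g a + g (1 - a)) := by
        refine intervalIntegral.integral_congr fun a ha => ?_
        rw [Set.uIcc_of_le zero_le_one] at ha
        rw [integral_Vaf ha.1 ha.2, integral_lowerVaf ha.1 ha.2,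
          integral_lowerVaf (by linarith [ha.2]) (by linarith [ha.1])]
    _ = 2 * ∫ a in (0 : ℝ)..1, g a := intervalIntegral.integral_add_comp_one_sub <|
        Continuous.intervalIntegrable (by fun_prop (disch := norm_num)) 0 1
    _ = 4 * π ^ 3 / 105 := by
        rw [hg, intervalIntegral.integral_const_mul,
          integral_rpow_three_halves_mul_one_sub_rpow_seven_halves_mul_linear]
        ring
end

section
/- The volume of the set of real unital qubit channels 𝒬_ℝ¹, identified with a convex subset of ℝ⁵ via the Choi parametrization with volume element 2⁴ dλ₅, equals 4π²/15; moreover the fibre volume over the classical parameter a ∈ [0,1] is V(a) = 8π² a²(1−a)². -/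
open MeasureTheory Real Matrix

/-!
In the coordinates `(d, e, p, q) = (w 2, w 3, w 0 - w 1, w 0 + w 1)` the Choi matrix is
orthogonally similar (via the basis `e₀ ± e₃`, `e₁ ∓ e₂`) to the direct sum of
`[[a + d, p], [p, 1 - a - e]]` and `[[a - d, q], [q, 1 - a + e]]`. Hence over a point `(d, e)` with
`|d| ≤ a`, `|e| ≤ 1 - a` the slice in `(p, q)` is a rectangle of area
`4 √(a² - d²) √((1 - a)² - e²)`, and integrating over `(d, e)` gives the product of the areas `π a²`
and `π (1 - a)²` of two discs. The change of variables has Jacobian `2`, so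
`V(a) = 2⁴ · π² a² (1 - a)² / 2`, and `∫₀¹ a² (1 - a)² da = 1/30` gives the total volume.
-/

/-- The Choi matrix of a real unital qubit channel with classical parameter `a` and free
parameters `(b,c,d,e) ∈ ℝ⁴`. -/
noncomputable def choiRUnital (a : ℝ) (w : Fin 4 → ℝ) : Matrix (Fin 4) (Fin 4) ℝ :=
  !![a, w 0, w 1, w 2;
     w 0, 1 - a, w 3, -(w 1);
     w 1, w 3, 1 - a, -(w 0);
     w 2, -(w 1), -(w 0), a]

theorem forall_quadratic_nonneg_iff (α β γ : ℝ) :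
    (∀ u v : ℝ, 0 ≤ α * u ^ 2 + 2 * γ * (u * v) + β * v ^ 2) ↔
      0 ≤ α ∧ 0 ≤ β ∧ γ ^ 2 ≤ α * β := by
  constructor
  · intro h
    have hα := h 1 0
    have hβ := h 0 1
    refine ⟨by linarith, by linarith, ?_⟩
    by_contra! hdisc
    have hα' : α ≤ 0 := by nlinarith [h (-γ) α]
    have hβ' : β ≤ 0 := by nlinarith [h β (-γ)]
    nlinarith [h 1 (-γ)]
  · rintro ⟨hα, hβ, hγ⟩ u v
    rcases hα.eq_or_lt with rfl | hα
    · obtain rfl : γ = 0 := by nlinarith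
      nlinarith [mul_nonneg hβ (sq_nonneg v)]
    · nlinarith [sq_nonneg (α * u + γ * v), mul_nonneg (sub_nonneg.2 hγ) (sq_nonneg v)]

theorem volume_setOf_sq_le (A : ℝ) : volume {p : ℝ | p ^ 2 ≤ A} = ENNReal.ofReal (2 * √A) := by
  rcases le_or_gt 0 A with hA | hA
  · have : {p : ℝ | p ^ 2 ≤ A} = Set.Icc (-√A) √A := by
      ext p
      exact Real.sq_le hA
    rw [this, Real.volume_Icc, sub_neg_eq_add, two_mul]
  · have : {p : ℝ | p ^ 2 ≤ A} = ∅ :=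
      Set.eq_empty_of_forall_notMem fun p hp => (sq_nonneg p).not_gt (lt_of_le_of_lt hp hA)
    rw [this, Real.sqrt_eq_zero'.2 hA.le, mul_zero, ENNReal.ofReal_zero, measure_empty]

theorem volume_setOf_sq_add_sq_le (r : ℝ) :
    volume {z : ℝ × ℝ | z.1 ^ 2 + z.2 ^ 2 ≤ r ^ 2} = ENNReal.ofReal (π * r ^ 2) := by
  have hdisc : {z : ℝ × ℝ | z.1 ^ 2 + z.2 ^ 2 ≤ r ^ 2} =
      Complex.measurableEquivRealProd.symm ⁻¹' Metric.closedBall 0 |r| := by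
    ext z
    rw [Set.mem_preimage, mem_closedBall_zero_iff, ← sq_le_sq₀ (norm_nonneg _) (abs_nonneg r),
      Complex.sq_norm, Complex.normSq_apply, sq_abs]
    simp only [sq, Set.mem_ofPred_eq, Complex.measurableEquivRealProd_symm_apply]
  rw [hdisc, Complex.volume_preserving_equiv_real_prod.symm.measure_preimage
      measurableSet_closedBall.nullMeasurableSet, Complex.volume_closedBall,
    ← ENNReal.ofReal_pow (abs_nonneg r), sq_abs, ← ENNReal.ofReal_coe_nnreal, NNReal.coe_real_pi,
    ← ENNReal.ofReal_mul (by positivity), mul_comm]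

theorem lintegral_ofReal_two_mul_sqrt_sq_sub_sq (r : ℝ) :
    ∫⁻ x, ENNReal.ofReal (2 * √(r ^ 2 - x ^ 2)) = ENNReal.ofReal (π * r ^ 2) := by
  have hmeas : MeasurableSet {z : ℝ × ℝ | z.1 ^ 2 + z.2 ^ 2 ≤ r ^ 2} :=
    (isClosed_le (by fun_prop) (by fun_prop)).measurableSet
  rw [← volume_setOf_sq_add_sq_le, Measure.volume_eq_prod, Measure.prod_apply hmeas]
  refine lintegral_congr fun x => ?_
  rw [← volume_setOf_sq_le]
  congr 1
  ext y
  simp only [le_sub_iff_add_le', Set.mem_ofPred_eq, Set.preimage_ofPred_eq]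

theorem volume_preserving_fin_four_pairs {α : Type*} [MeasureSpace α]
    [SigmaFinite (volume : Measure α)] :
    MeasurePreserving (fun w : Fin 4 → α => ((w 0, w 1), (w 2, w 3))) volume volume :=
  ((volume_preserving_finTwoArrow α).prod (volume_preserving_finTwoArrow α)).comp
    ((volume_measurePreserving_sumPiEquivProdPi fun _ : Fin 2 ⊕ Fin 2 => α).comp
      (volume_measurePreserving_piCongrLeft (fun _ : Fin 4 => α)
        (finSumFinEquiv : Fin 2 ⊕ Fin 2 ≃ Fin 4)).symm)

theorem integral_sq_mul_one_sub_sq : ∫ x in (0 : ℝ)..1, x ^ 2 * (1 - x) ^ 2 = 1 / 30 := by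
  have hderiv (x : ℝ) :
      HasDerivAt (fun x => x ^ 3 / 3 - x ^ 4 / 2 + x ^ 5 / 5) (x ^ 2 * (1 - x) ^ 2) x :=
    ((((hasDerivAt_pow 3 x).div_const 3).sub ((hasDerivAt_pow 4 x).div_const 2)).add
      ((hasDerivAt_pow 5 x).div_const 5)).congr_deriv (by norm_num; ring)
  rw [intervalIntegral.integral_eq_sub_of_hasDerivAt (fun x _ => hderiv x)
    ((by fun_prop : Continuous fun x : ℝ => x ^ 2 * (1 - x) ^ 2).intervalIntegrable _ _)]
  norm_num

theorem dotProduct_choiRUnital_mulVec (a : ℝ) (w x : Fin 4 → ℝ) :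
    x ⬝ᵥ (choiRUnital a w *ᵥ x) =
      ((a + w 2) * (x 0 + x 3) ^ 2 + 2 * (w 0 - w 1) * ((x 0 + x 3) * (x 1 - x 2)) +
          (1 - a - w 3) * (x 1 - x 2) ^ 2 +
        ((a - w 2) * (x 0 - x 3) ^ 2 + 2 * (w 0 + w 1) * ((x 0 - x 3) * (x 1 + x 2)) +
          (1 - a + w 3) * (x 1 + x 2) ^ 2)) / 2 := by
  simp only [dotProduct, mulVec, choiRUnital, of_apply, cons_val', cons_val_fin_one,
    Fin.sum_univ_four, cons_val_zero, cons_val_one, cons_val]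
  ring

theorem choiRUnital_posSemidef_iff (a : ℝ) (w : Fin 4 → ℝ) :
    (choiRUnital a w).PosSemidef ↔
      (0 ≤ a + w 2 ∧ 0 ≤ 1 - a - w 3 ∧ (w 0 - w 1) ^ 2 ≤ (a + w 2) * (1 - a - w 3)) ∧
      (0 ≤ a - w 2 ∧ 0 ≤ 1 - a + w 3 ∧ (w 0 + w 1) ^ 2 ≤ (a - w 2) * (1 - a + w 3)) := by
  have hHerm : (choiRUnital a w).IsHermitian := by
    ext i j
    fin_cases i <;> fin_cases j <;> simp [choiRUnital]
  simp only [posSemidef_iff_dotProduct_mulVec, hHerm, true_and, star_trivial,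
    dotProduct_choiRUnital_mulVec, ← forall_quadratic_nonneg_iff]
  constructor
  · intro h
    refine ⟨fun u v => ?_, fun u v => ?_⟩
    · have := h ![u, v, -v, u]
      simp only [cons_val_zero, cons_val_one, cons_val] at this
      linarith
    · have := h ![u, v, v, -u]
      simp only [cons_val_zero, cons_val_one, cons_val] at this
      linarith
  · rintro ⟨h₁, h₂⟩ x
    exact div_nonneg (add_nonneg (h₁ _ _) (h₂ _ _)) zero_le_two

theorem isClosed_setOf_choiRUnital_posSemidef :
    IsClosed {v : ℝ × (Fin 4 → ℝ) | (choiRUnital v.1 v.2).PosSemidef} := by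
  simp only [choiRUnital_posSemidef_iff, Set.ofPred_and]
  refine .inter (.inter ?_ (.inter ?_ ?_)) (.inter ?_ (.inter ?_ ?_)) <;>
    exact isClosed_le (by fun_prop) (by fun_prop)

def choiBlockCoord (w : Fin 4 → ℝ) : (ℝ × ℝ) × (ℝ × ℝ) :=
  ((w 2, w 3), (w 0 - w 1, w 0 + w 1))

theorem volume_preimage_choiBlockCoord {S : Set ((ℝ × ℝ) × (ℝ × ℝ))} (hS : MeasurableSet S) :
    volume (choiBlockCoord ⁻¹' S) = 2⁻¹ * volume S := by
  let L : (Fin 4 → ℝ) →ₗ[ℝ] (Fin 4 → ℝ) :=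
    toLin' !![0, 0, 1, 0; 0, 0, 0, 1; 1, -1, 0, 0; 1, 1, 0, 0]
  have hdet : LinearMap.det L = 2 := by
    simp [L, LinearMap.det_toLin', det_succ_row_zero, Fin.sum_univ_succ,
      Fin.succAbove_of_le_castSucc, Fin.succAbove_of_castSucc_lt, one_add_one_eq_two]
  have hcomp : choiBlockCoord = (fun w : Fin 4 → ℝ => ((w 0, w 1), (w 2, w 3))) ∘ L := by
    funext w
    simp [choiBlockCoord, L, mulVec, dotProduct, Fin.sum_univ_four, sub_eq_add_neg]
  rw [hcomp, Set.preimage_comp, Measure.addHaar_preimage_linearMap _ (by simp [hdet]), hdet,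
    volume_preserving_fin_four_pairs.measure_preimage hS.nullMeasurableSet, abs_inv,
    abs_two, ENNReal.ofReal_inv_of_pos two_pos, ENNReal.ofReal_ofNat]

def choiBlockSet (a : ℝ) : Set ((ℝ × ℝ) × (ℝ × ℝ)) :=
  {z | (0 ≤ a + z.1.1 ∧ 0 ≤ 1 - a - z.1.2 ∧ z.2.1 ^ 2 ≤ (a + z.1.1) * (1 - a - z.1.2)) ∧
    (0 ≤ a - z.1.1 ∧ 0 ≤ 1 - a + z.1.2 ∧ z.2.2 ^ 2 ≤ (a - z.1.1) * (1 - a + z.1.2))}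

theorem setOf_choiRUnital_posSemidef (a : ℝ) :
    {w | (choiRUnital a w).PosSemidef} = choiBlockCoord ⁻¹' choiBlockSet a := by
  ext w
  exact choiRUnital_posSemidef_iff a w

theorem measurableSet_choiBlockSet (a : ℝ) : MeasurableSet (choiBlockSet a) := by
  refine IsClosed.measurableSet ?_
  simp only [choiBlockSet, Set.ofPred_and]
  refine .inter (.inter ?_ (.inter ?_ ?_)) (.inter ?_ (.inter ?_ ?_)) <;>
    exact isClosed_le (by fun_prop) (by fun_prop)

-- Both sides vanish off `|d| ≤ a, |e| ≤ 1 - a`, the right one because `√` is `0` on negatives.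
theorem volume_choiBlockSet_slice {a : ℝ} (ha : a ∈ Set.Icc (0 : ℝ) 1) (x : ℝ × ℝ) :
    volume (Prod.mk x ⁻¹' choiBlockSet a) =
      ENNReal.ofReal (2 * √(a ^ 2 - x.1 ^ 2)) * ENNReal.ofReal (2 * √((1 - a) ^ 2 - x.2 ^ 2)) := by
  obtain ⟨d, e⟩ := x
  obtain ⟨ha₀, ha₁⟩ := ha
  by_cases h : |d| ≤ a ∧ |e| ≤ 1 - a
  · obtain ⟨hd, he⟩ := And.imp abs_le.1 abs_le.1 h
    have hslice : Prod.mk (d, e) ⁻¹' choiBlockSet a =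
        {p | p ^ 2 ≤ (a + d) * (1 - a - e)} ×ˢ {q | q ^ 2 ≤ (a - d) * (1 - a + e)} := by
      ext ⟨p, q⟩
      simp only [choiBlockSet, Set.mem_preimage, Set.mem_ofPred_eq, Set.mem_prod]
      constructor
      · rintro ⟨⟨-, -, hp⟩, -, -, hq⟩
        exact ⟨hp, hq⟩
      · rintro ⟨hp, hq⟩
        exact ⟨⟨by linarith, by linarith, hp⟩, by linarith, by linarith, hq⟩
    rw [hslice, Measure.volume_eq_prod, Measure.prod_prod, volume_setOf_sq_le, volume_setOf_sq_le,
      ← ENNReal.ofReal_mul (by positivity), ← ENNReal.ofReal_mul (by positivity)]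
    congr 1
    have key : √((a + d) * (1 - a - e)) * √((a - d) * (1 - a + e)) =
        √(a ^ 2 - d ^ 2) * √((1 - a) ^ 2 - e ^ 2) := by
      rw [← Real.sqrt_mul (by nlinarith), ← Real.sqrt_mul (by nlinarith)]
      ring_nf
    linear_combination 4 * key
  · have hslice : Prod.mk (d, e) ⁻¹' choiBlockSet a = ∅ := by
      refine Set.eq_empty_of_forall_notMem fun ⟨p, q⟩ => ?_
      rintro ⟨⟨h₁, h₂, -⟩, h₃, h₄, -⟩
      exact h ⟨abs_le.2 ⟨by linarith, by linarith⟩, abs_le.2 ⟨by linarith, by linarith⟩⟩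
    have hdeg : a ^ 2 - d ^ 2 ≤ 0 ∨ (1 - a) ^ 2 - e ^ 2 ≤ 0 := by
      rw [not_and_or, not_le, not_le] at h
      refine h.imp (fun h => ?_) (fun h => ?_) <;> nlinarith [sq_abs d, sq_abs e]
    rw [hslice, measure_empty]
    rcases hdeg with h | h <;> simp [Real.sqrt_eq_zero'.2 h]

theorem volume_choiBlockSet {a : ℝ} (ha : a ∈ Set.Icc (0 : ℝ) 1) :
    volume (choiBlockSet a) = ENNReal.ofReal (π * a ^ 2) * ENNReal.ofReal (π * (1 - a) ^ 2) := by
  rw [Measure.volume_eq_prod, Measure.prod_apply (measurableSet_choiBlockSet a)]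
  simp_rw [volume_choiBlockSet_slice ha]
  rw [Measure.volume_eq_prod,
    lintegral_prod_mul (f := fun d => ENNReal.ofReal (2 * √(a ^ 2 - d ^ 2)))
      (g := fun e => ENNReal.ofReal (2 * √((1 - a) ^ 2 - e ^ 2))) (by fun_prop) (by fun_prop),
    lintegral_ofReal_two_mul_sqrt_sq_sub_sq, lintegral_ofReal_two_mul_sqrt_sq_sub_sq]

theorem volume_setOf_choiRUnital_posSemidef (a : ℝ) :
    volume {w : Fin 4 → ℝ | (choiRUnital a w).PosSemidef} =
      (Set.Icc (0 : ℝ) 1).indicator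
        (fun a => ENNReal.ofReal (π ^ 2 / 2 * (a ^ 2 * (1 - a) ^ 2))) a := by
  by_cases ha : a ∈ Set.Icc (0 : ℝ) 1
  · rw [Set.indicator_of_mem ha, setOf_choiRUnital_posSemidef,
      volume_preimage_choiBlockCoord (measurableSet_choiBlockSet a), volume_choiBlockSet ha,
      ← ENNReal.ofReal_mul (by positivity), ← ENNReal.ofReal_ofNat 2,
      ← ENNReal.ofReal_inv_of_pos two_pos, ← ENNReal.ofReal_mul (by norm_num)]
    congr 1
    ring
  · have hempty : {w : Fin 4 → ℝ | (choiRUnital a w).PosSemidef} = ∅ := by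
      refine Set.eq_empty_of_forall_notMem fun w hw => ha ⟨?_, ?_⟩
      · simpa [choiRUnital] using hw.diag_nonneg (i := 0)
      · simpa [choiRUnital] using hw.diag_nonneg (i := 1)
    rw [Set.indicator_of_notMem ha, hempty, measure_empty]

/-- The volume of the space of real unital qubit channels `𝒬_ℝ¹ ⊆ ℝ⁵` (volume element
`2⁴ dλ₅`) equals `4π²/15`, and the fibre volume over `a ∈ [0,1]` is `V(a) = 8π² a²(1-a)²`. -/
theorem stmt_16 :
    2 ^ 4 * volume {v : ℝ × (Fin 4 → ℝ) | (choiRUnital v.1 v.2).PosSemidef} =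
        ENNReal.ofReal (4 * π ^ 2 / 15) ∧
      ∀ a ∈ Set.Icc (0 : ℝ) 1,
        2 ^ 4 * volume {w : Fin 4 → ℝ | (choiRUnital a w).PosSemidef} =
          ENNReal.ofReal (8 * π ^ 2 * a ^ 2 * (1 - a) ^ 2) := by
  have h16 (x : ℝ) : (2 : ENNReal) ^ 4 * ENNReal.ofReal x = ENNReal.ofReal (16 * x) := by
    rw [ENNReal.ofReal_mul (by norm_num)]
    norm_num
  refine ⟨?_, fun a ha => ?_⟩
  · rw [Measure.volume_eq_prod,
      Measure.prod_apply isClosed_setOf_choiRUnital_posSemidef.measurableSet]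
    simp_rw [Set.preimage_ofPred_eq, volume_setOf_choiRUnital_posSemidef]
    rw [lintegral_indicator measurableSet_Icc,
      ← ofReal_integral_eq_lintegral_ofReal (by fun_prop : Continuous _).integrableOn_Icc
        (Filter.Eventually.of_forall fun a => by positivity),
      integral_Icc_eq_integral_Ioc, ← intervalIntegral.integral_of_le zero_le_one,
      intervalIntegral.integral_const_mul, integral_sq_mul_one_sub_sq, h16]
    congr 1
    ring
  · rw [volume_setOf_choiRUnital_posSemidef, Set.indicator_of_mem ha, h16]
    congr 1
    ring
end

section
/- Let a, f ∈ [0,1] and x ∈ (|a−f|, √((1−a)f) + √(a(1−f))). Then there exist real numbers d, e with e² ≤ (1−a)f and d² ≤ a(1−f) such that the matrix Q = [[a,0,0,d],[0,1−a,e,0],[0,e,f,0],[d,0,0,1−f]] is positive semidefinite and max(|d+e|, |d−e|, |a−f|) = x. Consequently, for every such x there is a qubit channel over the classical channel (a,f) whose trace-distance contraction coefficient equals x. -/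
/-!
Split `x = d + e` with `0 ≤ e ≤ √((1-a)f)` and `0 ≤ d ≤ √(a(1-f))`, which is possible since
`0 ≤ x ≤ √((1-a)f) + √(a(1-f))`. The Choi matrix is then a direct sum of the two positive
semidefinite `2 × 2` blocks `[[a, d], [d, 1-f]]` and `[[1-a, e], [e, f]]`, and for `d, e ≥ 0`
the coefficient `max(|d+e|, |d-e|, |a-f|)` is `d + e = x` because `|a-f| < x`.
-/

open Real

theorem quadratic_nonneg_of_sq_le {p q r : ℝ} (hp : 0 ≤ p) (hq : 0 ≤ q) (hr : r ^ 2 ≤ p * q)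
    (u v : ℝ) : 0 ≤ p * u ^ 2 + 2 * r * u * v + q * v ^ 2 := by
  rcases hp.eq_or_lt with rfl | hp
  · obtain rfl : r = 0 := by nlinarith
    nlinarith [mul_nonneg hq (sq_nonneg v)]
  · -- `p` times the form is `(p u + r v)² + (p q - r²) v²`
    refine nonneg_of_mul_nonneg_right ?_ hp
    nlinarith [sq_nonneg (p * u + r * v), mul_nonneg (sub_nonneg.2 hr) (sq_nonneg v)]

theorem posSemidef_of_sq_le {a b c g d e : ℝ} (ha : 0 ≤ a) (hb : 0 ≤ b) (hc : 0 ≤ c)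
    (hg : 0 ≤ g) (hd : d ^ 2 ≤ a * g) (he : e ^ 2 ≤ b * c) :
    (!![a, 0, 0, d; 0, b, e, 0; 0, e, c, 0; d, 0, 0, g]).PosSemidef := by
  rw [Matrix.posSemidef_iff_dotProduct_mulVec]
  refine ⟨?_, fun v => ?_⟩
  · ext i j
    fin_cases i <;> fin_cases j <;> rfl
  · have outer := quadratic_nonneg_of_sq_le ha hg hd (v 0) (v 3)
    have inner := quadratic_nonneg_of_sq_le hb hc he (v 1) (v 2)
    simp only [dotProduct, Pi.star_apply, star_trivial, Matrix.mulVec, Matrix.of_apply,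
      Matrix.cons_val', Matrix.cons_val_fin_one, Fin.sum_univ_four, Fin.isValue,
      Matrix.cons_val_zero, Matrix.cons_val_one, Matrix.cons_val, zero_mul, add_zero, zero_add]
    nlinarith

theorem exists_add_eq_of_le_add {α : Type*} [AddCommGroup α] [LinearOrder α]
    [IsOrderedAddMonoid α] {s t x : α} (hs : 0 ≤ s) (ht : 0 ≤ t) (hx₀ : 0 ≤ x)
    (hx : x ≤ s + t) : ∃ d e, 0 ≤ d ∧ d ≤ t ∧ 0 ≤ e ∧ e ≤ s ∧ d + e = x := by
  refine ⟨x - min s x, min s x, sub_nonneg.2 (min_le_right _ _), ?_, le_min hs hx₀,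
    min_le_left _ _, sub_add_cancel _ _⟩
  rcases le_total s x with h | h
  · rwa [min_eq_left h, sub_le_iff_le_add, add_comm]
  · rwa [min_eq_right h, sub_self]

theorem max_abs_add_abs_sub_of_nonneg {d e : ℝ} (hd : 0 ≤ d) (he : 0 ≤ e) :
    max |d + e| |d - e| = d + e := by
  rw [abs_of_nonneg (add_nonneg hd he), max_eq_left (abs_le.2 ⟨by linarith, by linarith⟩)]

/-- For `a, f ∈ [0,1]` and any `x ∈ (|a-f|, √((1-a)f) + √(a(1-f)))` there exist `d, e ∈ ℝ`
with `e² ≤ (1-a)f` and `d² ≤ a(1-f)` such that the Choi matrix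
`[[a,0,0,d],[0,1-a,e,0],[0,e,f,0],[d,0,0,1-f]]` is positive semidefinite and the
trace-distance contraction coefficient `max(|d+e|, |d-e|, |a-f|)` of the corresponding
qubit channel equals `x`. -/
theorem stmt_19 (a f : ℝ) (ha : a ∈ Set.Icc (0 : ℝ) 1) (hf : f ∈ Set.Icc (0 : ℝ) 1)
    (x : ℝ) (hx : x ∈ Set.Ioo |a - f| (Real.sqrt ((1 - a) * f) + Real.sqrt (a * (1 - f)))) :
    ∃ d e : ℝ, e ^ 2 ≤ (1 - a) * f ∧ d ^ 2 ≤ a * (1 - f) ∧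
      (!![a, 0, 0, d;
          0, 1 - a, e, 0;
          0, e, f, 0;
          d, 0, 0, 1 - f]).PosSemidef ∧
      max (max |d + e| |d - e|) |a - f| = x := by
  obtain ⟨ha₀, ha₁⟩ := ha
  obtain ⟨hf₀, hf₁⟩ := hf
  obtain ⟨hx_lower, hx_upper⟩ := hx
  obtain ⟨d, e, hd₀, hd, he₀, he, rfl⟩ := exists_add_eq_of_le_add (sqrt_nonneg _)
    (sqrt_nonneg _) ((abs_nonneg _).trans hx_lower.le) hx_upper.le
  have he_sq : e ^ 2 ≤ (1 - a) * f :=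
    (le_sqrt he₀ (mul_nonneg (sub_nonneg.2 ha₁) hf₀)).1 he
  have hd_sq : d ^ 2 ≤ a * (1 - f) :=
    (le_sqrt hd₀ (mul_nonneg ha₀ (sub_nonneg.2 hf₁))).1 hd
  refine ⟨d, e, he_sq, hd_sq, ?_, ?_⟩
  · exact posSemidef_of_sq_le ha₀ (sub_nonneg.2 ha₁) hf₀ (sub_nonneg.2 hf₁) hd_sq he_sq
  · rw [max_abs_add_abs_sub_of_nonneg hd₀ he₀, max_eq_left hx_lower.le]
end
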